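/- arXiv:math/0610295 — 2 statements merged into one kernel-verified Lean document; each statement's English description precedes it below -/
import Mathlib

section
/- The function f(s, t) = arccosh(√(1 + s²) · cosh t) / √(t² + s²), defined a priori on ℝ² \ {0}, extends to a continuous function on all of ℝ² with value 1 at the origin. -/
/-- The inverse hyperbolic cosine, `arcosh x = log (x + √(x² − 1))`
(Mathlib has `Real.arsinh` but no `arcosh` here, so we define it). -/
noncomputable def Real.arcosh' (x : ℝ) : ℝ := Real.log (x + Real.sqrt (x ^ 2 - 1))

/-!
Put `a = arcosh (√(1 + s²) cosh t)` and `r = √(t² + s²)`. Then `cosh a = √(1 + s²) cosh t` and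
`sinh² a = s² cosh² t + sinh² t`, so the elementary bounds `t² ≤ sinh² t ≤ t² cosh² t` give
`r ≤ sinh a ≤ r cosh r`. Together with `a ≤ sinh a ≤ a cosh a` this squeezes `a / r` between
`1 / (√(1 + s²) cosh t)` and `cosh r`, two continuous functions equal to `1` at the origin.
-/

open Real Filter Topology Function

theorem continuous_update_of_squeeze {X : Type*} [TopologicalSpace X] [T1Space X]
    [DecidableEq X] {f g h : X → ℝ} {x₀ : X} {c : ℝ} (hf : ContinuousOn f {x₀}ᶜ)
    (hg : Tendsto g (𝓝 x₀) (𝓝 c)) (hh : Tendsto h (𝓝 x₀) (𝓝 c))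
    (hgf : ∀ x ≠ x₀, g x ≤ f x) (hfh : ∀ x ≠ x₀, f x ≤ h x) :
    Continuous (update f x₀ c) := by
  refine continuous_iff_continuousAt.2 fun x => ?_
  rcases eq_or_ne x x₀ with rfl | hx
  · rw [continuousAt_update_same]
    exact tendsto_of_tendsto_of_tendsto_of_le_of_le' (hg.mono_left nhdsWithin_le_nhds)
      (hh.mono_left nhdsWithin_le_nhds) (eventually_nhdsWithin_of_forall hgf)
      (eventually_nhdsWithin_of_forall hfh)
  · rw [continuousAt_update_of_ne hx]
    exact hf.continuousAt (isOpen_compl_singleton.mem_nhds hx)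

namespace Real

lemma arcosh'_eq_arcosh : arcosh' = arcosh := rfl

lemma sinh_le_mul_cosh {x : ℝ} (hx : 0 ≤ x) : sinh x ≤ x * cosh x := by
  have hmvt := (convex_Icc 0 x).image_sub_le_mul_sub_of_deriv_le continuous_sinh.continuousOn
    differentiable_sinh.differentiableOn (C := cosh x) (fun y hy => ?_) 0 ⟨le_rfl, hx⟩ x
    ⟨hx, le_rfl⟩ hx
  · simpa [mul_comm] using hmvt
  · rw [interior_Icc] at hy
    rw [deriv_sinh, cosh_le_cosh, abs_of_pos hy.1, abs_of_nonneg hx]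
    exact hy.2.le

lemma sq_le_sinh_sq (x : ℝ) : x ^ 2 ≤ sinh x ^ 2 := by
  wlog hx : 0 ≤ x
  · simpa using this (-x) (by linarith)
  exact pow_le_pow_left₀ hx (self_le_sinh_iff.2 hx) 2

lemma sinh_sq_le_sq_mul_cosh_sq (x : ℝ) : sinh x ^ 2 ≤ x ^ 2 * cosh x ^ 2 := by
  wlog hx : 0 ≤ x
  · simpa using this (-x) (by linarith)
  rw [← mul_pow]
  exact pow_le_pow_left₀ (sinh_nonneg_iff.2 hx) (sinh_le_mul_cosh hx) 2

end Real

noncomputable def arcoshQuotient (p : ℝ × ℝ) : ℝ :=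
  arcosh' (√(1 + p.1 ^ 2) * cosh p.2) / √(p.2 ^ 2 + p.1 ^ 2)

section

variable (s t : ℝ)

lemma one_le_sqrt_one_add_sq_mul_cosh : 1 ≤ √(1 + s ^ 2) * cosh t :=
  one_le_mul_of_one_le_of_one_le (one_le_sqrt.2 (by nlinarith)) (one_le_cosh t)

lemma sinh_arcosh_sqrt_mul_cosh_sq :
    sinh (arcosh (√(1 + s ^ 2) * cosh t)) ^ 2 = s ^ 2 * cosh t ^ 2 + sinh t ^ 2 := by
  have hx := one_le_sqrt_one_add_sq_mul_cosh s t
  rw [sinh_arcosh hx, sq_sqrt (sub_nonneg.2 (one_le_pow₀ hx)), mul_pow,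
    sq_sqrt (by positivity), cosh_sq]
  ring

lemma sinh_arcosh_sqrt_mul_cosh_nonneg : 0 ≤ sinh (arcosh (√(1 + s ^ 2) * cosh t)) :=
  sinh_nonneg_iff.2 (arcosh_nonneg (one_le_sqrt_one_add_sq_mul_cosh s t))

lemma sqrt_le_sinh_arcosh_sqrt_mul_cosh :
    √(t ^ 2 + s ^ 2) ≤ sinh (arcosh (√(1 + s ^ 2) * cosh t)) := by
  rw [← sqrt_sq (sinh_arcosh_sqrt_mul_cosh_nonneg s t), sinh_arcosh_sqrt_mul_cosh_sq]
  have : s ^ 2 ≤ s ^ 2 * cosh t ^ 2 :=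
    le_mul_of_one_le_right (sq_nonneg s) (one_le_pow₀ (one_le_cosh t))
  exact sqrt_le_sqrt (by linarith [sq_le_sinh_sq t])

lemma sinh_arcosh_sqrt_mul_cosh_le :
    sinh (arcosh (√(1 + s ^ 2) * cosh t)) ≤ √(t ^ 2 + s ^ 2) * cosh √(t ^ 2 + s ^ 2) := by
  set r := √(t ^ 2 + s ^ 2)
  have hcosh : cosh t ≤ cosh r := by
    rw [cosh_le_cosh, abs_of_nonneg (sqrt_nonneg _), ← sqrt_sq_eq_abs]
    exact sqrt_le_sqrt (by nlinarith)
  rw [← sqrt_sq (sinh_arcosh_sqrt_mul_cosh_nonneg s t), sinh_arcosh_sqrt_mul_cosh_sq,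
    ← sqrt_sq (by positivity : 0 ≤ r * cosh r)]
  apply sqrt_le_sqrt
  calc s ^ 2 * cosh t ^ 2 + sinh t ^ 2 ≤ r ^ 2 * cosh t ^ 2 := by
        rw [sq_sqrt (by positivity)]; nlinarith [sinh_sq_le_sq_mul_cosh_sq t]
    _ ≤ (r * cosh r) ^ 2 := by
        rw [mul_pow]; gcongr

end

lemma sqrt_sq_add_sq_pos {p : ℝ × ℝ} (hp : p ≠ (0, 0)) : 0 < √(p.2 ^ 2 + p.1 ^ 2) := by
  obtain ⟨s, t⟩ := p
  obtain hs | ht : s ≠ 0 ∨ t ≠ 0 := by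
    contrapose! hp
    simp [hp]
  all_goals positivity

lemma inv_le_arcoshQuotient {p : ℝ × ℝ} (hp : p ≠ (0, 0)) :
    (√(1 + p.1 ^ 2) * cosh p.2)⁻¹ ≤ arcoshQuotient p := by
  have hx := one_le_sqrt_one_add_sq_mul_cosh p.1 p.2
  rw [arcoshQuotient, le_div_iff₀ (sqrt_sq_add_sq_pos hp), inv_mul_le_iff₀ (by positivity),
    arcosh'_eq_arcosh]
  calc √(p.2 ^ 2 + p.1 ^ 2) ≤ sinh (arcosh (√(1 + p.1 ^ 2) * cosh p.2)) :=
        sqrt_le_sinh_arcosh_sqrt_mul_cosh p.1 p.2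
    _ ≤ arcosh (√(1 + p.1 ^ 2) * cosh p.2) * cosh (arcosh (√(1 + p.1 ^ 2) * cosh p.2)) :=
        sinh_le_mul_cosh (arcosh_nonneg hx)
    _ = _ := by rw [cosh_arcosh hx, mul_comm]

lemma arcoshQuotient_le_cosh {p : ℝ × ℝ} (hp : p ≠ (0, 0)) :
    arcoshQuotient p ≤ cosh √(p.2 ^ 2 + p.1 ^ 2) := by
  have hx := one_le_sqrt_one_add_sq_mul_cosh p.1 p.2
  rw [arcoshQuotient, div_le_iff₀' (sqrt_sq_add_sq_pos hp), arcosh'_eq_arcosh]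
  calc arcosh (√(1 + p.1 ^ 2) * cosh p.2)
      ≤ sinh (arcosh (√(1 + p.1 ^ 2) * cosh p.2)) := self_le_sinh_iff.2 (arcosh_nonneg hx)
    _ ≤ _ := sinh_arcosh_sqrt_mul_cosh_le p.1 p.2

lemma continuousOn_arcoshQuotient : ContinuousOn arcoshQuotient {(0, 0)}ᶜ := by
  have hnum : Continuous fun p : ℝ × ℝ => arcosh (√(1 + p.1 ^ 2) * cosh p.2) :=
    continuousOn_arcosh.comp_continuous (by fun_prop)
      fun p => one_le_sqrt_one_add_sq_mul_cosh p.1 p.2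
  exact hnum.continuousOn.div (by fun_prop) fun p hp => (sqrt_sq_add_sq_pos hp).ne'

theorem arcosh_quotient_extends_continuously :
    ∃ F : ℝ × ℝ → ℝ, Continuous F ∧ F (0, 0) = 1 ∧
      ∀ p : ℝ × ℝ, p ≠ (0, 0) →
        F p = Real.arcosh' (Real.sqrt (1 + p.1 ^ 2) * Real.cosh p.2) /
          Real.sqrt (p.2 ^ 2 + p.1 ^ 2) := by
  classical
  have hlower : Tendsto (fun p : ℝ × ℝ => (√(1 + p.1 ^ 2) * cosh p.2)⁻¹) (𝓝 (0, 0)) (𝓝 1) := by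
    simpa using (by fun_prop (disch := simp) :
      ContinuousAt (fun p : ℝ × ℝ => (√(1 + p.1 ^ 2) * cosh p.2)⁻¹) (0, 0)).tendsto
  have hupper : Tendsto (fun p : ℝ × ℝ => cosh √(p.2 ^ 2 + p.1 ^ 2)) (𝓝 (0, 0)) (𝓝 1) := by
    simpa using
      (by fun_prop : Continuous fun p : ℝ × ℝ => cosh √(p.2 ^ 2 + p.1 ^ 2)).tendsto (0, 0)
  refine ⟨update arcoshQuotient (0, 0) 1, ?_, update_self .., fun p hp => update_of_ne hp ..⟩
  exact continuous_update_of_squeeze continuousOn_arcoshQuotient hlower hupper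
    (fun p hp => inv_le_arcoshQuotient hp) (fun p hp => arcoshQuotient_le_cosh hp)
end

section
/- On the upper half-space model of H³, with coordinates (x,y,z), the operator Δ_E = ∂²/∂x² + ∂²/∂y² + ∂²/∂z² + z^{-1} ∂/∂z satisfies the conformal rescaling identity z³ ∇^{*_E}∇ (z^{-1} φ) = (∇*∇ − 1) φ for every smooth section φ, where ∇*∇ is the connection (rough) Laplacian with respect to the hyperbolic metric and ∇^{*_E}∇ the rough Laplacian with respect to the flat Euclidean metric on H³ × S¹ restricted to S¹-invariant sections. -/
/-!
STATEMENT 8. On the upper half-space model of H³, with coordinates (x,y,z), the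
operator Δ_E = ∂²/∂x² + ∂²/∂y² + ∂²/∂z² + z^{-1} ∂/∂z satisfies the conformal
rescaling identity z³ ∇^{*_E}∇ (z^{-1} φ) = (∇*∇ − 1) φ for every smooth
section φ, where ∇*∇ is the rough Laplacian of the hyperbolic metric and
∇^{*_E}∇ that of the flat Euclidean metric on H³ × S¹ restricted to
S¹-invariant sections.

On (S¹-invariant, trivialised) sections, ∇^{*_E}∇ = −Δ_E, while the hyperbolic
rough Laplacian is ∇*∇ φ = −(z²(φ_xx + φ_yy + φ_zz) − z φ_z).  The identity is
stated for a smooth function φ of the three coordinates (components of a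
section in a trivialisation), at any point with z > 0.
-/
theorem conformal_rescaling_laplacian (φ : ℝ → ℝ → ℝ → ℝ)
    (hφ : ContDiff ℝ (⊤ : ℕ∞) (fun p : ℝ × ℝ × ℝ => φ p.1 p.2.1 p.2.2))
    (x y z : ℝ) (hz : 0 < z) :
    z ^ 3 *
        (-(deriv (deriv (fun x' => φ x' y z / z)) x
            + deriv (deriv (fun y' => φ x y' z / z)) y
            + deriv (deriv (fun z' => φ x y z' / z')) z
            + z⁻¹ * deriv (fun z' => φ x y z' / z') z)) =
      (-(z ^ 2 * (deriv (deriv (fun x' => φ x' y z)) x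
            + deriv (deriv (fun y' => φ x y' z)) y
            + deriv (deriv (fun z' => φ x y z')) z)
          - z * deriv (fun z' => φ x y z') z))
        - φ x y z := by
  have hzne : z ≠ 0 := hz.ne'
  -- x and y directions: dividing by the constant z
  have ex : deriv (deriv (fun x' => φ x' y z / z)) x
      = deriv (deriv (fun x' => φ x' y z)) x / z := by
    have : deriv (fun x' => φ x' y z / z) = fun t => deriv (fun x' => φ x' y z) t / z := by
      funext t; exact deriv_div_const _
    rw [this, deriv_div_const]
  have ey : deriv (deriv (fun y' => φ x y' z / z)) y
      = deriv (deriv (fun y' => φ x y' z)) y / z := by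
    have : deriv (fun y' => φ x y' z / z) = fun t => deriv (fun y' => φ x y' z) t / z := by
      funext t; exact deriv_div_const _
    rw [this, deriv_div_const]
  -- z direction
  set g : ℝ → ℝ := fun z' => φ x y z' with hgdef
  have hg : ContDiff ℝ (⊤ : ℕ∞) g := by
    have : ContDiff ℝ (⊤ : ℕ∞) (fun z' : ℝ => ((x, y, z') : ℝ × ℝ × ℝ)) :=
      ContDiff.prodMk contDiff_const (ContDiff.prodMk contDiff_const contDiff_id)
    exact hφ.comp this
  have hg' := (contDiff_infty_iff_deriv.mp (hg.of_le (by simp))).2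
  have hgd : ∀ t : ℝ, HasDerivAt g (deriv g t) t :=
    fun t => (hg.differentiable (by simp) t).hasDerivAt
  have hgd' : ∀ t : ℝ, HasDerivAt (deriv g) (deriv (deriv g) t) t :=
    fun t => (hg'.differentiable (by simp) t).hasDerivAt
  have stepA : ∀ t : ℝ, t ≠ 0 →
      deriv (fun s => g s / s) t = (deriv g t * t - g t) / t ^ 2 := by
    intro t ht
    have := ((hgd t).div (hasDerivAt_id t) ht).deriv
    simpa [Pi.div_def] using this
  have e1 : deriv (fun z' => φ x y z' / z') z = (deriv g z * z - g z) / z ^ 2 :=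
    stepA z hzne
  have eev : deriv (fun s => g s / s) =ᶠ[nhds z] fun t => (deriv g t * t - g t) / t ^ 2 := by
    filter_upwards [Ioi_mem_nhds hz] with t ht
    exact stepA t (ne_of_gt ht)
  have e2 : deriv (deriv (fun z' => φ x y z' / z')) z
      = (deriv (deriv g) z * z * z ^ 2 - (deriv g z * z - g z) * (2 * z)) / (z ^ 2) ^ 2 := by
    rw [eev.deriv_eq]
    have hnum : HasDerivAt (fun t => deriv g t * t - g t)
        (deriv (deriv g) z * z + deriv g z * 1 - deriv g z) z :=
      ((hgd' z).mul (hasDerivAt_id z)).sub (hgd z)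
    have hden : HasDerivAt (fun t : ℝ => t ^ 2) (2 * z) z := by
      simpa using hasDerivAt_pow 2 z
    have := (hnum.div hden (pow_ne_zero 2 hzne)).deriv
    rw [show (fun t => (deriv g t * t - g t) / t ^ 2) = (fun t => deriv g t * t - g t) / (fun t : ℝ => t ^ 2) from rfl, this]; ring
  rw [ex, ey, e1, e2]
  field_simp
  ring
end
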